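/- arXiv:1210.6335 — 5 statements merged into one kernel-verified Lean document; each statement's English description precedes it below -/
import Mathlib

section
/- β(9) = 6; that is, there is a finite simple graph with 6 edges having exactly 9 spanning trees, and no finite simple graph with fewer than 6 edges has exactly 9 spanning trees. -/
open SimpleGraph

instance (priority := 2000) myDecConnected {V : Type*} [Fintype V] [DecidableEq V]
    (G : SimpleGraph V) [DecidableRel G.Adj] : Decidable G.Connected :=
  decidable_of_iff (G.Preconnected ∧ ∃ _ : V, True)
    (by rw [connected_iff]
        exact and_congr_right fun _ => ⟨fun ⟨x,_⟩ => ⟨x⟩, fun ⟨x⟩ => ⟨x, trivial⟩⟩)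

instance decSdiffSingle {V : Type*} [DecidableEq V] (G : SimpleGraph V) [DecidableRel G.Adj]
    (e : Sym2 V) : DecidableRel (G \ fromEdgeSet {e}).Adj := fun a b =>
  decidable_of_iff (G.Adj a b ∧ ¬(s(a,b) = e ∧ a ≠ b))
    (by rw [sdiff_adj, fromEdgeSet_adj, Set.mem_singleton_iff])

instance decAcyclic {V : Type*} [Fintype V] [DecidableEq V]
    (G : SimpleGraph V) [DecidableRel G.Adj] : Decidable G.IsAcyclic :=
  decidable_of_iff (∀ v w, G.Adj v w → ¬(G \ fromEdgeSet {s(v,w)}).Reachable v w)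
    (by rw [isAcyclic_iff_forall_adj_isBridge]
        exact forall₂_congr fun v w =>
          ⟨fun h hvw => h hvw, fun h hvw => h hvw⟩)

instance decIsTree {V : Type*} [Fintype V] [DecidableEq V]
    (G : SimpleGraph V) [DecidableRel G.Adj] : Decidable G.IsTree :=
  decidable_of_iff (G.Connected ∧ G.IsAcyclic) (isTree_iff G).symm

instance decFromEdgeSetAdj {V : Type*} [DecidableEq V] (s : Finset (Sym2 V)) :
    DecidableRel (fromEdgeSet (↑s : Set (Sym2 V))).Adj := fun a b =>
  decidable_of_iff (s(a,b) ∈ s ∧ a ≠ b) (by rw [fromEdgeSet_adj, Finset.mem_coe])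

/-- The number of spanning trees of a simple graph `G`: the number of spanning
subgraphs of `G` that are trees. -/
noncomputable def numSpanningTrees {V : Type*} (G : SimpleGraph V) : ℕ :=
  Nat.card {H : G.Subgraph // H.IsSpanning ∧ H.coe.IsTree}

/-- `graphBeta n` is the least number `k` for which there exists a finite simple graph
with `k` edges having precisely `n` spanning trees. -/
noncomputable def graphBeta (n : ℕ) : ℕ :=
  sInf {k | ∃ (m : ℕ) (G : SimpleGraph (Fin m)),
    Nat.card G.edgeSet = k ∧ numSpanningTrees G = n}

lemma iso_isAcyclic {V W : Type*} {A : SimpleGraph V} {B : SimpleGraph W} (e : A ≃g B)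
    (h : A.IsAcyclic) : B.IsAcyclic :=
  fun _v c hc => h (c.map e.symm.toHom) (hc.map e.symm.toEquiv.injective)

lemma iso_isTree_iff {V W : Type*} {A : SimpleGraph V} {B : SimpleGraph W} (e : A ≃g B) :
    A.IsTree ↔ B.IsTree := by
  rw [isTree_iff, isTree_iff, e.connected_iff]
  exact and_congr_right fun _ =>
    ⟨fun h => iso_isAcyclic e h, fun h => iso_isAcyclic e.symm h⟩

lemma nst_eq_nat_card {V : Type*} (G : SimpleGraph V) :
    numSpanningTrees G = Nat.card {H : SimpleGraph V // H ≤ G ∧ H.IsTree} := by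
  refine Nat.card_congr ⟨?_, ?_, ?_, ?_⟩
  · exact fun ⟨H, hs, ht⟩ => ⟨H.spanningCoe, H.spanningCoe_le,
      (iso_isTree_iff (H.spanningCoeEquivCoeOfSpanning hs)).mpr ht⟩
  · refine fun ⟨H, hle, ht⟩ => ⟨SimpleGraph.toSubgraph H hle, toSubgraph.isSpanning H hle, ?_⟩
    exact (iso_isTree_iff ((SimpleGraph.toSubgraph H hle).spanningCoeEquivCoeOfSpanning
      (toSubgraph.isSpanning H hle))).mp ht
  · rintro ⟨H, hs, ht⟩
    apply Subtype.ext
    exact SimpleGraph.Subgraph.ext (by simpa using hs.verts_eq_univ.symm) rfl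
  · rintro ⟨H, hle, ht⟩
    rfl

def treeCount {V : Type*} [Fintype V] [DecidableEq V] (G : SimpleGraph V)
    [DecidableRel G.Adj] : ℕ :=
  ((G.edgeFinset.powersetCard (Fintype.card V - 1)).filter
    (fun s : Finset (Sym2 V) => (fromEdgeSet (↑s : Set (Sym2 V))).IsTree)).card

lemma natcard_eq_treeCount {V : Type*} [Fintype V] [DecidableEq V] (G : SimpleGraph V)
    [DecidableRel G.Adj] :
    Nat.card {H : SimpleGraph V // H ≤ G ∧ H.IsTree} = treeCount G := by
  classical
  letI : ∀ H : SimpleGraph V, Fintype H.edgeSet := fun H => (H.edgeSet.toFinite).fintype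
  have hfe : ∀ (s : Finset (Sym2 V)), s ⊆ G.edgeFinset → fromEdgeSet (↑s : Set (Sym2 V)) ≤ G := by
    intro s hs
    calc fromEdgeSet (↑s : Set (Sym2 V)) ≤ fromEdgeSet G.edgeSet :=
          fromEdgeSet_mono (by rwa [← coe_edgeFinset G, Finset.coe_subset])
      _ = G := fromEdgeSet_edgeSet G
  have hre : ∀ H : SimpleGraph V, fromEdgeSet (↑H.edgeFinset : Set (Sym2 V)) = H := by
    intro H; rw [coe_edgeFinset, fromEdgeSet_edgeSet]
  have e : {H : SimpleGraph V // H ≤ G ∧ H.IsTree} ≃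
      {s : Finset (Sym2 V) // s ∈ (G.edgeFinset.powersetCard (Fintype.card V - 1)).filter
        (fun s : Finset (Sym2 V) => (fromEdgeSet (↑s : Set (Sym2 V))).IsTree)} := by
    refine ⟨fun H => ⟨H.1.edgeFinset, ?_⟩, fun s => ⟨fromEdgeSet ↑s.1, ?_, ?_⟩, ?_, ?_⟩
    · rw [Finset.mem_filter, Finset.mem_powersetCard]
      refine ⟨⟨edgeFinset_subset_edgeFinset.mpr H.2.1, ?_⟩, ?_⟩
      · have := H.2.2.card_edgeFinset; omega
      · rw [hre H.1]; exact H.2.2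
    · have hs := s.2
      rw [Finset.mem_filter, Finset.mem_powersetCard] at hs
      exact hfe s.1 hs.1.1
    · have hs := s.2
      rw [Finset.mem_filter] at hs
      exact hs.2
    · rintro ⟨H, h⟩
      exact Subtype.ext (hre H)
    · rintro ⟨s, hs⟩
      rw [Finset.mem_filter, Finset.mem_powersetCard] at hs
      apply Subtype.ext
      dsimp only
      ext e
      simp only [mem_edgeFinset, edgeSet_fromEdgeSet, Set.mem_diff, Finset.mem_coe,
        Set.mem_setOf_eq]
      exact ⟨fun h => h.1, fun h => ⟨h, G.not_isDiag_of_mem_edgeSet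
        (mem_edgeFinset.mp (hs.1.1 h))⟩⟩
  rw [Nat.card_congr e, Nat.card_eq_fintype_card, treeCount]
  rw [Fintype.card_coe]
  congr!

lemma nst_eq_treeCount {V : Type*} [Fintype V] [DecidableEq V] (G : SimpleGraph V)
    [DecidableRel G.Adj] : numSpanningTrees G = treeCount G := by
  rw [nst_eq_nat_card, natcard_eq_treeCount]

lemma map_map_symm {V W : Type*} (e : V ≃ W) (X : SimpleGraph V) :
    (X.map e.toEmbedding).map e.symm.toEmbedding = X := by
  rw [map_symm, comap_map_eq]

lemma nst_map {V W : Type*} (e : V ≃ W) (G : SimpleGraph V) :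
    numSpanningTrees (G.map e.toEmbedding) = numSpanningTrees G := by
  rw [nst_eq_nat_card, nst_eq_nat_card]
  have h2 : ∀ X : SimpleGraph W, (X.map e.symm.toEmbedding).map e.toEmbedding = X := by
    intro X; have := map_map_symm e.symm X; rwa [e.symm_symm] at this
  refine Nat.card_congr ⟨fun K => ⟨K.1.map e.symm.toEmbedding, ?_, ?_⟩,
    fun H => ⟨H.1.map e.toEmbedding, ?_, ?_⟩, ?_, ?_⟩
  · have := map_monotone e.symm.toEmbedding K.2.1
    rwa [map_map_symm e G] at this
  · exact (iso_isTree_iff (SimpleGraph.Iso.map e.symm K.1)).mp K.2.2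
  · exact map_monotone e.toEmbedding H.2.1
  · exact (iso_isTree_iff (SimpleGraph.Iso.map e H.1)).mp H.2.2
  · rintro ⟨K, hK⟩
    exact Subtype.ext (h2 K)
  · rintro ⟨H, hH⟩
    exact Subtype.ext (map_map_symm e H)

def bowtieE : Finset (Sym2 (Fin 5)) :=
  {s(0,1), s(0,2), s(1,2), s(0,3), s(0,4), s(3,4)}

def bowtie : SimpleGraph (Fin 5) := fromEdgeSet ↑bowtieE

instance : DecidableRel bowtie.Adj := fun a b =>
  decidable_of_iff (s(a,b) ∈ bowtieE ∧ a ≠ b)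
    (by rw [bowtie, fromEdgeSet_adj, Finset.mem_coe])

set_option maxRecDepth 100000 in
set_option maxHeartbeats 4000000 in
lemma bowtie_card : bowtie.edgeFinset.card = 6 := by decide

set_option maxRecDepth 100000 in
set_option maxHeartbeats 8000000 in
lemma bowtie_treeCount : treeCount bowtie = 9 := by decide

set_option maxRecDepth 100000 in
set_option maxHeartbeats 16000000 in
lemma fin4_dec : ∀ s : Finset (Sym2 (Fin 4)), s ⊆ (⊤ : SimpleGraph (Fin 4)).edgeFinset →
    s.card = 5 → ((s.powersetCard 3).filter
      (fun t : Finset (Sym2 (Fin 4)) => (fromEdgeSet (↑t : Set (Sym2 (Fin 4)))).IsTree)).card ≠ 9 := by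
  decide

lemma bowtie_natcard : Nat.card bowtie.edgeSet = 6 := by
  rw [Nat.card_eq_fintype_card, ← edgeFinset_card]
  exact bowtie_card

lemma bowtie_nst : numSpanningTrees bowtie = 9 := by
  rw [nst_eq_treeCount]
  exact bowtie_treeCount

lemma lower {V : Type} [Fintype V] (G : SimpleGraph V)
    (hcard : Nat.card G.edgeSet < 6) : numSpanningTrees G ≠ 9 := by
  classical
  intro h9
  have hT : treeCount G = 9 := by rw [← nst_eq_treeCount]; exact h9
  set n := Fintype.card V with hn
  set m := G.edgeFinset.card with hmdef
  have hm6 : m < 6 := by rwa [Nat.card_eq_fintype_card, ← edgeFinset_card] at hcard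
  have hb : treeCount G ≤ m.choose (n - 1) := by
    rw [treeCount]
    calc ((G.edgeFinset.powersetCard (n - 1)).filter _).card
        ≤ (G.edgeFinset.powersetCard (n - 1)).card := Finset.card_filter_le _ _
      _ = m.choose (n - 1) := by rw [Finset.card_powersetCard]
  have hpos : 0 < treeCount G := by omega
  rw [treeCount] at hpos
  obtain ⟨s, hs⟩ := Finset.card_pos.mp hpos
  rw [Finset.mem_filter, Finset.mem_powersetCard] at hs
  have hn1m : n - 1 ≤ m := hs.1.2 ▸ Finset.card_le_card hs.1.1
  have hnm : m ≤ n.choose 2 := G.card_edgeFinset_le_card_choose_two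
  have hn1 : 1 ≤ n := by
    have := hs.2.isConnected.nonempty
    exact Fintype.card_pos
  have h9le : 9 ≤ m.choose (n - 1) := hT ▸ hb
  have hn6 : n ≤ 6 := by omega
  have key : n = 4 ∧ m = 5 := by
    interval_cases n <;> interval_cases m <;> revert h9le hnm <;> decide
  obtain ⟨hn4, hm5⟩ := key
  have e : V ≃ Fin 4 := Fintype.equivFinOfCardEq hn4
  set G' := G.map e.toEmbedding with hG'
  have hT' : treeCount G' = 9 := by
    rw [← nst_eq_treeCount, nst_map]
    exact h9
  have hc5 : G'.edgeFinset.card = 5 := by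
    erw [← (SimpleGraph.Iso.map e G).card_edgeFinset_eq]
    exact hm5 ▸ rfl
  refine fin4_dec G'.edgeFinset (edgeFinset_subset_edgeFinset.mpr le_top) hc5 ?_
  rw [treeCount] at hT'
  simpa using hT'

theorem stmt_6 :
    graphBeta 9 = 6 ∧
    (∃ (V : Type) (_ : Fintype V) (G : SimpleGraph V),
      Nat.card G.edgeSet = 6 ∧ numSpanningTrees G = 9) ∧
    (∀ (V : Type) [Fintype V] (G : SimpleGraph V),
      Nat.card G.edgeSet < 6 → numSpanningTrees G ≠ 9) := by
  have hmem : (6 : ℕ) ∈ {k | ∃ (m : ℕ) (G : SimpleGraph (Fin m)),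
      Nat.card G.edgeSet = k ∧ numSpanningTrees G = 9} :=
    ⟨5, bowtie, bowtie_natcard, bowtie_nst⟩
  refine ⟨le_antisymm (Nat.sInf_le hmem) ?_, ⟨Fin 5, inferInstance, bowtie,
    bowtie_natcard, bowtie_nst⟩, fun V _ G h => lower G h⟩
  refine le_csInf ⟨6, hmem⟩ ?_
  rintro k ⟨m, G, hc, h9⟩
  by_contra hlt
  exact lower G (hc ▸ (by omega : k < 6)) h9
end

section
/- β(37) ≤ 9; that is, there exists a finite simple graph with 9 edges having exactly 37 spanning trees. -/
open SimpleGraph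

section TreeLemmas

variable {V : Type*}

lemma reachable_delete_of_walk {G : SimpleGraph V} {v w : V}
    (hvw : (G \ fromEdgeSet {s(v,w)}).Reachable v w) :
    ∀ {x y : V}, G.Walk x y → (G \ fromEdgeSet {s(v,w)}).Reachable x y := by
  intro x y p
  induction p with
  | nil => exact Reachable.refl _
  | @cons a b c h q ih =>
    refine Reachable.trans ?_ ih
    by_cases hadj : (G \ fromEdgeSet {s(v,w)}).Adj a b
    · exact hadj.reachable
    · have h2 : (fromEdgeSet {s(v,w)} : SimpleGraph V).Adj a b := by
        by_contra h3
        exact hadj ⟨h, h3⟩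
      rw [fromEdgeSet_adj, Set.mem_singleton_iff, Sym2.eq_iff] at h2
      rcases h2.1 with ⟨rfl, rfl⟩ | ⟨rfl, rfl⟩
      · exact hvw
      · exact hvw.symm

lemma connected_delete_of_not_bridge {G : SimpleGraph V} {v w : V}
    (hG : G.Connected) (hvw : (G \ fromEdgeSet {s(v,w)}).Reachable v w) :
    (G \ fromEdgeSet {s(v,w)}).Connected := by
  rw [connected_iff]
  refine ⟨fun x y => ?_, hG.nonempty⟩
  obtain ⟨p⟩ := hG.preconnected x y
  exact reachable_delete_of_walk hvw p

lemma conn_card_aux [Fintype V] :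
    ∀ (n : ℕ) (G : SimpleGraph V), Nat.card G.edgeSet = n → G.Connected →
      Fintype.card V ≤ n + 1 ∧ (Fintype.card V = n + 1 → G.IsAcyclic) := by
  intro n
  induction n using Nat.strong_induction_on with
  | _ n ih =>
    intro G hn hG
    classical
    by_cases hac : G.IsAcyclic
    · have htree : G.IsTree := ⟨hG, hac⟩
      have hF : Fintype G.edgeSet := Fintype.ofFinite _
      have hc := htree.card_edgeFinset
      rw [SimpleGraph.edgeFinset_card, ← Nat.card_eq_fintype_card, hn] at hc
      exact ⟨le_of_eq hc.symm, fun _ => hac⟩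
    · rw [isAcyclic_iff_forall_adj_isBridge] at hac
      push_neg at hac
      obtain ⟨v, w, hadj, hbr⟩ := hac
      have hvw : (G \ fromEdgeSet {s(v,w)}).Reachable v w := by
        by_contra hr
        exact hbr (isBridge_iff.mpr hr)
      have hconn' := connected_delete_of_not_bridge hG hvw
      have hmem : s(v,w) ∈ G.edgeSet := hadj
      have hedge : (G \ fromEdgeSet {s(v,w)}).edgeSet = G.edgeSet \ {s(v,w)} := by
        rw [edgeSet_sdiff, edgeSet_fromEdgeSet, edgeSet_sdiff_sdiff_isDiag]
      have hne : G.edgeSet.Finite := Set.toFinite _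
      have hcard : Nat.card (G \ fromEdgeSet {s(v,w)}).edgeSet = n - 1 := by
        rw [Nat.card_coe_set_eq, hedge, Set.ncard_diff_singleton_of_mem hmem,
          ← Nat.card_coe_set_eq, hn]
      have hnpos : 1 ≤ n := by
        rw [← hn]
        have : Nonempty G.edgeSet := ⟨⟨_, hmem⟩⟩
        exact Nat.card_pos
      have := ih (n-1) (by omega) _ hcard hconn'
      refine ⟨by omega, fun h => absurd this.1 (by omega)⟩

lemma isTree_iff_card [Fintype V] (G : SimpleGraph V) :
    G.IsTree ↔ G.Connected ∧ Nat.card G.edgeSet + 1 = Fintype.card V := by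
  classical
  constructor
  · intro h
    have hF : Fintype G.edgeSet := Fintype.ofFinite _
    have hc := h.card_edgeFinset
    rw [SimpleGraph.edgeFinset_card, ← Nat.card_eq_fintype_card] at hc
    exact ⟨h.isConnected, hc⟩
  · rintro ⟨h1, h2⟩
    exact ⟨h1, (conn_card_aux _ G rfl h1).2 h2.symm⟩

lemma isTree_of_iso {W : Type*} {A : SimpleGraph V} {B : SimpleGraph W}
    (e : A ≃g B) (h : A.IsTree) : B.IsTree := by
  refine ⟨e.connected_iff.mp h.isConnected, ?_⟩
  intro v c hc
  have hm : (c.mapLe (le_refl B)).IsCycle := hc.mapLe _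
  have := h.IsAcyclic (c.map e.symm.toHom) (hc.map e.symm.toEquiv.injective)
  exact this
end TreeLemmas


section Closure

lemma connected_iff_forall_reachable_zero {n : ℕ} (G : SimpleGraph (Fin (n+1))) :
    G.Connected ↔ ∀ v, G.Reachable 0 v :=
  ⟨fun h v => h.preconnected 0 v,
   fun h => (connected_iff G).mpr ⟨fun u v => (h u).symm.trans (h v), ⟨0⟩⟩⟩

/-- One step of the reachability closure. -/
def stepFn (s : Finset (Sym2 (Fin 7))) (r : Finset (Fin 7)) : Finset (Fin 7) :=
  Finset.univ.filter (fun w => w ∈ r ∨ ∃ v ∈ r, v ≠ w ∧ s(v, w) ∈ s)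

lemma reachable_of_mem_iter (s : Finset (Sym2 (Fin 7))) :
    ∀ (k : ℕ) (v : Fin 7), v ∈ (stepFn s)^[k] ({0} : Finset (Fin 7)) →
      (fromEdgeSet (↑s : Set (Sym2 (Fin 7)))).Reachable 0 v := by
  intro k
  induction k with
  | zero =>
    intro v hv
    simp only [Function.iterate_zero, id, Finset.mem_singleton] at hv
    subst hv; exact Reachable.refl _
  | succ k ih =>
    intro v hv
    rw [Function.iterate_succ_apply'] at hv
    unfold stepFn at hv
    rw [Finset.mem_filter] at hv
    rcases hv.2 with h | ⟨u, hu, hne, hmem⟩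
    · exact ih v h
    · refine (ih u hu).trans (Adj.reachable ?_)
      rw [fromEdgeSet_adj]
      exact ⟨hmem, hne⟩

lemma mem_iter_of_walk (s : Finset (Sym2 (Fin 7))) :
    ∀ {u v : Fin 7} (p : (fromEdgeSet (↑s : Set (Sym2 (Fin 7)))).Walk u v) (k : ℕ),
      u ∈ (stepFn s)^[k] ({0} : Finset (Fin 7)) →
      v ∈ (stepFn s)^[k + p.length] ({0} : Finset (Fin 7)) := by
  intro u v p
  induction p with
  | nil => intro k h; simpa using h
  | @cons a b c h q ih =>
    intro k hk
    have hb : b ∈ (stepFn s)^[k+1] ({0} : Finset (Fin 7)) := by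
      rw [Function.iterate_succ_apply']
      unfold stepFn
      rw [Finset.mem_filter]
      rw [fromEdgeSet_adj] at h
      exact ⟨Finset.mem_univ _, Or.inr ⟨a, hk, h.2, h.1⟩⟩
    have := ih (k+1) hb
    have heq : k + 1 + q.length = k + (q.length + 1) := by omega
    rw [heq] at this
    simpa using this

lemma iter_mono_len (s : Finset (Sym2 (Fin 7))) (k m : ℕ) (h : k ≤ m) :
    (stepFn s)^[k] ({0} : Finset (Fin 7)) ⊆ (stepFn s)^[m] ({0} : Finset (Fin 7)) := by
  induction m with
  | zero => simp_all
  | succ m ih =>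
    rcases Nat.lt_or_ge k (m+1) with hlt | hge
    · refine (ih (by omega)).trans ?_
      rw [Function.iterate_succ_apply']
      intro x hx
      unfold stepFn
      rw [Finset.mem_filter]
      exact ⟨Finset.mem_univ _, Or.inl hx⟩
    · have : k = m + 1 := by omega
      subst this; exact subset_rfl

lemma conn_iff (s : Finset (Sym2 (Fin 7))) :
    (stepFn s)^[6] ({0} : Finset (Fin 7)) = Finset.univ ↔
      (fromEdgeSet (↑s : Set (Sym2 (Fin 7)))).Connected := by
  rw [connected_iff_forall_reachable_zero]
  constructor
  · intro h v
    exact reachable_of_mem_iter s 6 v (h ▸ Finset.mem_univ v)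
  · intro h
    apply Finset.eq_univ_of_forall
    intro v
    obtain ⟨p⟩ := h v
    have hlen : p.toPath.1.length ≤ 6 := by
      have := p.toPath.2.length_lt
      simpa using Nat.lt_succ_iff.mp (by simpa using this)
    have h0 : (0 : Fin 7) ∈ (stepFn s)^[0] ({0} : Finset (Fin 7)) := by simp
    have := mem_iter_of_walk s p.toPath.1 0 h0
    rw [zero_add] at this
    exact iter_mono_len s _ 6 hlen this

end Closure

section TheGraph

def Efin : Finset (Sym2 (Fin 7)) :=
  {s(0,1), s(0,2), s(0,3), s(0,4), s(1,2), s(1,3), s(2,5), s(4,6), s(5,6)}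

def G0 : SimpleGraph (Fin 7) := fromEdgeSet (↑Efin : Set (Sym2 (Fin 7)))

def Pfin (s : Finset (Sym2 (Fin 7))) : Prop :=
  s.card = 6 ∧ (stepFn s)^[6] ({0} : Finset (Fin 7)) = Finset.univ

instance : DecidablePred Pfin := fun s => by unfold Pfin; infer_instance

set_option maxRecDepth 1000000 in
set_option maxHeartbeats 40000000 in
lemma count_eq : (Efin.powerset.filter Pfin).card = 37 := by decide

lemma Efin_not_diag : ∀ e ∈ Efin, ¬ e.IsDiag := by decide

lemma Efin_card : Efin.card = 9 := by decide

end TheGraph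

section Equivs

noncomputable def equivA :
    {H : G0.Subgraph // H.IsSpanning ∧ H.coe.IsTree} ≃
      {H : SimpleGraph (Fin 7) // H ≤ G0 ∧ H.IsTree} where
  toFun H := ⟨H.1.spanningCoe, H.1.spanningCoe_le,
    isTree_of_iso (H.1.spanningCoeEquivCoeOfSpanning H.2.1).symm H.2.2⟩
  invFun H := ⟨SimpleGraph.toSubgraph H.1 H.2.1,
    SimpleGraph.toSubgraph.isSpanning H.1 H.2.1,
    isTree_of_iso
      ((SimpleGraph.toSubgraph H.1 H.2.1).spanningCoeEquivCoeOfSpanning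
        (SimpleGraph.toSubgraph.isSpanning H.1 H.2.1)) H.2.2⟩
  left_inv H := by
    apply Subtype.ext
    apply SimpleGraph.Subgraph.ext
    · exact (H.2.1.verts_eq_univ).symm
    · rfl
  right_inv H := by
    apply Subtype.ext
    rfl

lemma edgeSet_subset_of_mem_powerset {s : Finset (Sym2 (Fin 7))}
    (hs : s ∈ Efin.powerset) :
    (fromEdgeSet (↑s : Set (Sym2 (Fin 7)))).edgeSet = (↑s : Set (Sym2 (Fin 7))) := by
  rw [SimpleGraph.edgeSet_fromEdgeSet]
  rw [Finset.mem_powerset] at hs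
  ext e
  simp only [Set.mem_diff, Set.mem_setOf_eq, Finset.mem_coe, and_iff_left_iff_imp]
  intro he
  exact Efin_not_diag e (hs he)

noncomputable def equivB :
    {H : SimpleGraph (Fin 7) // H ≤ G0 ∧ H.IsTree} ≃
      {s : Finset (Sym2 (Fin 7)) // s ∈ Efin.powerset.filter Pfin} where
  toFun H := ⟨(Set.toFinite H.1.edgeSet).toFinset, by
    have hmemp : (Set.toFinite H.1.edgeSet).toFinset ∈ Efin.powerset := by
      rw [Finset.mem_powerset]
      intro e he
      rw [Set.Finite.mem_toFinset] at he
      have := SimpleGraph.edgeSet_mono H.2.1 he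
      have h0 : G0.edgeSet = (↑Efin : Set (Sym2 (Fin 7))) :=
        edgeSet_subset_of_mem_powerset (Finset.mem_powerset_self _)
      rw [h0] at this
      exact this
    rw [Finset.mem_filter]
    refine ⟨hmemp, ?_, ?_⟩
    · have hc := (isTree_iff_card H.1).mp H.2.2
      have : Nat.card H.1.edgeSet = 6 := by
        have := hc.2
        simp only [Fintype.card_fin] at this
        omega
      rw [← this, Nat.card_coe_set_eq,
        Set.ncard_eq_toFinset_card _ (Set.toFinite H.1.edgeSet)]
    · rw [conn_iff]
      have : (↑(Set.toFinite H.1.edgeSet).toFinset : Set (Sym2 (Fin 7))) = H.1.edgeSet :=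
        Set.Finite.coe_toFinset _
      rw [this, SimpleGraph.fromEdgeSet_edgeSet]
      exact H.2.2.isConnected⟩
  invFun s := ⟨fromEdgeSet (↑s.1 : Set (Sym2 (Fin 7))), by
    have hmem := s.2
    rw [Finset.mem_filter] at hmem
    obtain ⟨hp, hcard, hconn⟩ := hmem
    refine ⟨?_, ?_⟩
    · unfold G0
      apply SimpleGraph.fromEdgeSet_mono
      rw [Finset.mem_powerset] at hp
      exact fun e he => hp he
    · rw [isTree_iff_card]
      refine ⟨(conn_iff s.1).mp hconn, ?_⟩
      rw [Nat.card_coe_set_eq, edgeSet_subset_of_mem_powerset hp,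
        Set.ncard_coe_finset, hcard]
      simp⟩
  left_inv H := by
    apply Subtype.ext
    show fromEdgeSet _ = H.1
    rw [Set.Finite.coe_toFinset, SimpleGraph.fromEdgeSet_edgeSet]
  right_inv s := by
    apply Subtype.ext
    show (Set.toFinite _).toFinset = s.1
    have hmem := s.2
    rw [Finset.mem_filter] at hmem
    apply Finset.ext
    intro e
    rw [Set.Finite.mem_toFinset, edgeSet_subset_of_mem_powerset hmem.1]
    rfl

end Equivs

lemma numSpanningTrees_G0 : numSpanningTrees G0 = 37 := by
  unfold numSpanningTrees
  rw [Nat.card_congr (equivA.trans equivB), Nat.card_eq_fintype_card,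
    Fintype.card_coe, count_eq]

lemma card_edgeSet_G0 : Nat.card G0.edgeSet = 9 := by
  have h : G0.edgeSet = (↑Efin : Set (Sym2 (Fin 7))) :=
    edgeSet_subset_of_mem_powerset (Finset.mem_powerset_self _)
  rw [h, Nat.card_coe_set_eq, Set.ncard_coe_finset, Efin_card]

theorem stmt_9 :
    graphBeta 37 ≤ 9 ∧
    (∃ (V : Type) (_ : Fintype V) (G : SimpleGraph V),
      Nat.card G.edgeSet = 9 ∧ numSpanningTrees G = 37) := by
  constructor
  · exact Nat.sInf_le ⟨7, G0, card_edgeSet_G0, numSpanningTrees_G0⟩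
  · exact ⟨Fin 7, inferInstance, G0, card_edgeSet_G0, numSpanningTrees_G0⟩
end

section
/- For every n in the set {40, 42, 45, 48, 60, 70, 72, 78, 85, 88, 102, 105, 112, 120, 130, 133, 165, 168, 190, 210, 232, 240, 253, 273, 280, 312, 330, 345, 357, 385, 408, 462, 520, 760, 840, 1320, 1365, 1848}, the inequality 4·β(n) ≤ n + 13 holds. -/
open SimpleGraph

namespace FigEight

variable (a b : ℕ)

instance instA : NeZero (a + 3) := ⟨by omega⟩
instance instB : NeZero (b + 3) := ⟨by omega⟩

/-- Number of vertices: the two cycles have lengths `a+3` and `b+3` and share one vertex. -/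
abbrev m : ℕ := a + b + 5

/-- Vertices of the `A`-cycle. -/
def cA (i : ZMod (a + 3)) : Fin (m a b) := ⟨i.val, by have := i.val_lt; simp only [m]; omega⟩

/-- Vertices of the `B`-cycle; index `0` is the shared center. -/
def cB (j : ZMod (b + 3)) : Fin (m a b) :=
  if j = 0 then ⟨0, by simp only [m]; omega⟩
  else ⟨a + 2 + j.val, by have := j.val_lt; simp only [m]; omega⟩

lemma cA_injective : Function.Injective (cA a b) := by
  intro i i' h
  have : i.val = i'.val := by
    have h2 : (cA a b i).val = (cA a b i').val := by rw [h]
    simpa [cA] using h2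
  exact ZMod.val_injective _ this

lemma cA_zero : cA a b 0 = ⟨0, by simp only [m]; omega⟩ := by
  simp [cA, ZMod.val_zero]

lemma cB_zero : cB a b 0 = ⟨0, by simp only [m]; omega⟩ := by
  simp [cB]

lemma cA_val_le (i : ZMod (a + 3)) : (cA a b i).val ≤ a + 2 := by
  have := i.val_lt; simp only [cA]; omega

lemma cB_val_ge (j : ZMod (b + 3)) (hj : j ≠ 0) : a + 3 ≤ (cB a b j).val := by
  have hv : 1 ≤ j.val := by
    rcases Nat.eq_zero_or_pos j.val with h | h
    · exact absurd ((ZMod.val_eq_zero j).mp h) hj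
    · exact h
  simp only [cB, if_neg hj]; omega

lemma cB_injective : Function.Injective (cB a b) := by
  intro j j' h
  by_cases hj : j = 0 <;> by_cases hj' : j' = 0
  · rw [hj, hj']
  · exfalso
    have h1 := cB_val_ge a b j' hj'
    rw [← h, hj, cB_zero] at h1; simp at h1
  · exfalso
    have h1 := cB_val_ge a b j hj
    rw [h, hj', cB_zero] at h1; simp at h1
  · have : j.val = j'.val := by
      have h2 : (cB a b j).val = (cB a b j').val := by rw [h]
      simp only [cB, if_neg hj, if_neg hj'] at h2
      omega
    exact ZMod.val_injective _ this

lemma cA_ne_cB (i : ZMod (a + 3)) (j : ZMod (b + 3)) (hj : j ≠ 0) : cA a b i ≠ cB a b j := by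
  intro h
  have h1 := cA_val_le a b i
  have h2 := cB_val_ge a b j hj
  rw [h] at h1; omega

lemma cA_eq_cB_iff (i : ZMod (a + 3)) (j : ZMod (b + 3)) :
    cA a b i = cB a b j ↔ i = 0 ∧ j = 0 := by
  constructor
  · intro h
    by_cases hj : j = 0
    · subst hj
      rw [cB_zero, ← cA_zero] at h
      exact ⟨cA_injective a b h, rfl⟩
    · exact absurd h (cA_ne_cB a b i j hj)
  · rintro ⟨h1, h2⟩
    rw [h1, h2, cA_zero, cB_zero]


section ZWindow

variable {n : ℕ} [NeZero n]
set_option linter.unusedSectionVars false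

lemma zval_one (hn : 2 ≤ n) : (1 : ZMod n).val = 1 := by
  rw [show (1 : ZMod n) = ((1 : ℕ) : ZMod n) by push_cast; rfl, ZMod.val_natCast,
    Nat.mod_eq_of_lt hn]

lemma zval_add_one {x : ZMod n} (hx : x.val + 1 < n) : (x + 1).val = x.val + 1 := by
  have hn : 2 ≤ n := by omega
  rw [ZMod.val_add, zval_one hn, Nat.mod_eq_of_lt (by omega)]

lemma zval_sub_one {x : ZMod n} (hx : x ≠ 0) : (x - 1).val + 1 = x.val := by
  have hx1 : 1 ≤ x.val := Nat.pos_of_ne_zero (fun h => hx ((ZMod.val_eq_zero x).mp h))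
  have hn : 2 ≤ n := by have := x.val_lt; omega
  have h1 : (1 : ZMod n).val ≤ x.val := by rw [zval_one hn]; omega
  rw [ZMod.val_sub h1, zval_one hn]; omega

/-- The "window" of indices strictly after `i` and up to (including) `i'`,
going around the cycle `ZMod n`. -/
def ZW (i i' : ZMod n) : Set (ZMod n) :=
  {s | 1 ≤ (s - i).val ∧ (s - i).val ≤ (i' - i).val}

lemma ZW_not_left (i i' : ZMod n) : i ∉ ZW i i' := by
  intro h
  rw [ZW, Set.mem_setOf_eq, sub_self, ZMod.val_zero] at h
  omega

lemma ZW_right {i i' : ZMod n} (h : i ≠ i') : i' ∈ ZW i i' := by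
  refine ⟨Nat.pos_of_ne_zero fun hv => ?_, le_refl _⟩
  exact h (sub_eq_zero.mp ((ZMod.val_eq_zero _).mp hv)).symm

lemma ZW_left_succ {i i' : ZMod n} (h : i ≠ i') : i + 1 ∈ ZW i i' := by
  have hd : 1 ≤ (i' - i).val := (ZW_right h).1
  have hn : 2 ≤ n := by have := (i' - i).val_lt; omega
  have e : (i + 1 - i) = 1 := by ring
  constructor
  · show 1 ≤ (i + 1 - i).val
    rw [e, zval_one hn]
  · show (i + 1 - i).val ≤ (i' - i).val
    rw [e, zval_one hn]; omega

lemma ZW_succ_mem {i i' s : ZMod n} (hs : s ∈ ZW i i') (hne : s ≠ i') : s + 1 ∈ ZW i i' := by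
  obtain ⟨h1, h2⟩ := hs
  have ht : (s - i).val < (i' - i).val := by
    rcases lt_or_eq_of_le h2 with h | h
    · exact h
    · exact absurd (by have := ZMod.val_injective n h; linear_combination' this + i) hne
  have hlt : (s - i).val + 1 < n := by have := (i' - i).val_lt; omega
  have e : s + 1 - i = (s - i) + 1 := by ring
  constructor
  · show 1 ≤ (s + 1 - i).val
    rw [e, zval_add_one hlt]; omega
  · show (s + 1 - i).val ≤ (i' - i).val
    rw [e, zval_add_one hlt]; omega

lemma ZW_pred_mem {i i' s : ZMod n} (hs : s ∈ ZW i i') (hne : s ≠ i + 1) : s - 1 ∈ ZW i i' := by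
  obtain ⟨h1, h2⟩ := hs
  have hn : 2 ≤ n := by have := (s - i).val_lt; omega
  have ht : 2 ≤ (s - i).val := by
    rcases Nat.lt_or_ge (s - i).val 2 with h | h
    · exfalso
      have hv : (s - i).val = 1 := by omega
      have : s - i = 1 := by
        have := ZMod.val_injective n (by rw [hv, zval_one hn] : (s - i).val = (1 : ZMod n).val)
        exact this
      exact hne (by linear_combination' this + i)
    · exact h
  have hsub : s - 1 - i = (s - i) - 1 := by ring
  have hz : s - i ≠ 0 := fun h => by simp [h] at h1
  have := zval_sub_one hz
  constructor
  · show 1 ≤ (s - 1 - i).val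
    rw [hsub]; omega
  · show (s - 1 - i).val ≤ (i' - i).val
    rw [hsub]; omega

lemma ZW_disjoint {i i' s : ZMod n} (hne : i ≠ i') (hs : s ∈ ZW i i') : s ∉ ZW i' i := by
  obtain ⟨h1, h2⟩ := hs
  intro hs'
  obtain ⟨h1', h2'⟩ := hs'
  have hd0 : i' - i ≠ 0 := sub_ne_zero.mpr hne.symm
  haveI : NeZero (i' - i) := ⟨hd0⟩
  have hdd : (i - i').val = n - (i' - i).val := by
    rw [show i - i' = -(i' - i) by ring, ZMod.val_neg_of_ne_zero]
  rcases eq_or_lt_of_le h2 with h | h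
  · have : s - i = i' - i := ZMod.val_injective n h
    have hsv : s = i' := by linear_combination' this + i
    rw [hsv, sub_self, ZMod.val_zero] at h1'; omega
  · have hsub : s - i' = -((i' - i) - (s - i)) := by ring
    have hvv : ((i' - i) - (s - i)).val = (i' - i).val - (s - i).val :=
      ZMod.val_sub (le_of_lt h)
    have hnz : (i' - i) - (s - i) ≠ 0 := by
      intro hh
      rw [hh, ZMod.val_zero] at hvv; omega
    haveI : NeZero ((i' - i) - (s - i)) := ⟨hnz⟩
    have : (s - i').val = n - ((i' - i).val - (s - i).val) := by
      rw [hsub, ZMod.val_neg_of_ne_zero, hvv]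
    have hdn := (i' - i).val_lt
    omega

lemma zval_two (hn : 3 ≤ n) : (2 : ZMod n).val = 2 := by
  rw [show (2 : ZMod n) = ((2 : ℕ) : ZMod n) by push_cast; rfl, ZMod.val_natCast,
    Nat.mod_eq_of_lt (by omega)]

lemma zone_ne_zero (hn : 3 ≤ n) : (1 : ZMod n) ≠ 0 := by
  intro h
  have := congrArg ZMod.val h
  rw [zval_one (by omega), ZMod.val_zero] at this
  omega

lemma ztwo_ne_zero (hn : 3 ≤ n) : (2 : ZMod n) ≠ 0 := by
  intro h
  have := congrArg ZMod.val h
  rw [zval_two hn, ZMod.val_zero] at this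
  omega

lemma zsucc_ne_self (hn : 3 ≤ n) (x : ZMod n) : x + 1 ≠ x := by
  intro h
  exact zone_ne_zero hn (by linear_combination' h)

end ZWindow

/-- The edges of the figure-eight graph, indexed by positions along the two cycles. -/
def E : ZMod (a + 3) ⊕ ZMod (b + 3) → Sym2 (Fin (m a b))
  | .inl i => s(cA a b i, cA a b (i + 1))
  | .inr j => s(cB a b j, cB a b (j + 1))

/-- The figure-eight graph: two cycles, of lengths `a+3` and `b+3`, sharing one vertex. -/
def G : SimpleGraph (Fin (m a b)) := fromEdgeSet (Set.range (E a b))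

lemma cB_succ_ne_cB (j : ZMod (b + 3)) : cB a b j ≠ cB a b (j + 1) := by
  intro h
  exact zsucc_ne_self (n := b + 3) (by omega) j (cB_injective a b h.symm)

lemma E_injective : Function.Injective (E a b) := by
  rintro (i | j) (i' | j') h <;> simp only [E, Sym2.eq_iff] at h
  · rcases h with ⟨h1, h2⟩ | ⟨h1, h2⟩
    · rw [cA_injective a b h1]
    · exfalso
      have e1 := cA_injective a b h1
      have e2 := cA_injective a b h2
      exact ztwo_ne_zero (n := a + 3) (by omega) (by linear_combination' e2 - e1)
  · exfalso
    rcases h with ⟨h1, h2⟩ | ⟨h1, h2⟩ <;>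
    · have e1 := (cA_eq_cB_iff a b _ _).mp h1
      have e2 := (cA_eq_cB_iff a b _ _).mp h2
      exact zone_ne_zero (n := a + 3) (by omega) (by linear_combination' e2.1 - e1.1)
  · exfalso
    rcases h with ⟨h1, h2⟩ | ⟨h1, h2⟩ <;>
    · have e1 := (cA_eq_cB_iff a b _ _).mp h1.symm
      have e2 := (cA_eq_cB_iff a b _ _).mp h2.symm
      exact zone_ne_zero (n := b + 3) (by omega) (by linear_combination' e2.2 - e1.2)
  · rcases h with ⟨h1, h2⟩ | ⟨h1, h2⟩
    · rw [cB_injective a b h1]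
    · exfalso
      have e1 := cB_injective a b h1
      have e2 := cB_injective a b h2
      exact ztwo_ne_zero (n := b + 3) (by omega) (by linear_combination' e2 - e1)

lemma E_not_diag (e : ZMod (a + 3) ⊕ ZMod (b + 3)) : ¬(E a b e).IsDiag := by
  rcases e with i | j <;> simp only [E, Sym2.mk_isDiag_iff]
  · intro h
    exact zsucc_ne_self (n := a + 3) (by omega) i (cA_injective a b h.symm)
  · exact cB_succ_ne_cB a b j

lemma G_adj_iff {u v : Fin (m a b)} :
    (G a b).Adj u v ↔ s(u, v) ∈ Set.range (E a b) ∧ u ≠ v := by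
  unfold G
  exact fromEdgeSet_adj _

lemma G_adj_cA (i : ZMod (a + 3)) : (G a b).Adj (cA a b i) (cA a b (i + 1)) :=
  G_adj_iff a b |>.mpr ⟨⟨.inl i, rfl⟩,
    fun h => zsucc_ne_self (n := a + 3) (by omega) i (cA_injective a b h.symm)⟩

lemma G_adj_cB (j : ZMod (b + 3)) : (G a b).Adj (cB a b j) (cB a b (j + 1)) :=
  G_adj_iff a b |>.mpr ⟨⟨.inr j, rfl⟩, cB_succ_ne_cB a b j⟩

lemma G_edgeSet : (G a b).edgeSet = Set.range (E a b) := by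
  rw [G, edgeSet_fromEdgeSet]
  ext e
  simp only [Set.mem_diff, Set.mem_setOf_eq]
  refine ⟨fun h => h.1, fun h => ⟨h, ?_⟩⟩
  obtain ⟨x, rfl⟩ := h
  exact E_not_diag a b x

lemma card_edgeSet : Nat.card (G a b).edgeSet = a + b + 6 := by
  rw [G_edgeSet, Nat.card_range_of_injective (E_injective a b), Nat.card_sum,
    Nat.card_zmod, Nat.card_zmod]
  omega


/-- If a set of vertices is closed under adjacency, walks starting in it stay in it. -/
lemma walk_confine {VT α : Type*} {K : SimpleGraph VT} (φ : VT → α) (S : Set α)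
    (hcl : ∀ ⦃x y⦄, K.Adj x y → φ x ∈ S → φ y ∈ S) :
    ∀ {x y : VT}, K.Walk x y → φ x ∈ S → φ y ∈ S := by
  intro x y w
  induction w with
  | nil => exact id
  | cons h p ih => exact fun hx => ih (hcl h hx)

/-- The spanning subgraph of `G a b` obtained by deleting the `i`-th `A`-edge and the
`j`-th `B`-edge. -/
def Hsub (i : ZMod (a + 3)) (j : ZMod (b + 3)) : (G a b).Subgraph where
  verts := Set.univ
  Adj u v := (G a b).Adj u v ∧ s(u, v) ≠ E a b (.inl i) ∧ s(u, v) ≠ E a b (.inr j)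
  adj_sub h := h.1
  edge_vert _ := Set.mem_univ _
  symm := by
    constructor
    rintro u v ⟨h1, h2, h3⟩
    refine ⟨h1.symm, ?_, ?_⟩ <;> rw [Sym2.eq_swap] <;> assumption

lemma Hsub_spanning (i : ZMod (a + 3)) (j : ZMod (b + 3)) : (Hsub a b i j).IsSpanning :=
  fun _ => Set.mem_univ _

/-- Key closure property: the arc of the `A`-cycle strictly between two deleted edges
(avoiding the center) is closed under adjacency avoiding those edges. -/
lemma closure_A {i i' : ZMod (a + 3)} (h0 : (0 : ZMod (a + 3)) ∉ ZW i i')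
    {u v : Fin (m a b)} (hadj : (G a b).Adj u v)
    (h1 : s(u, v) ≠ E a b (.inl i)) (h2 : s(u, v) ≠ E a b (.inl i'))
    (hu : u ∈ cA a b '' ZW i i') : v ∈ cA a b '' ZW i i' := by
  obtain ⟨⟨e, he⟩, hne⟩ := (G_adj_iff a b).mp hadj
  obtain ⟨s, hsW, hsu⟩ := hu
  rcases e with k | l
  · have hki : k ≠ i := by rintro rfl; exact h1 he.symm
    have hki' : k ≠ i' := by rintro rfl; exact h2 he.symm
    simp only [E, Sym2.eq_iff] at he
    rcases he with ⟨hx, hy⟩ | ⟨hx, hy⟩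
    · -- u = cA k, v = cA (k+1)
      have hsk : s = k := cA_injective a b (by rw [hsu, hx])
      subst hsk
      exact ⟨s + 1, ZW_succ_mem hsW hki', hy⟩
    · -- u = cA (k+1), v = cA k
      have hsk : s = k + 1 := cA_injective a b (by rw [hsu, hy])
      subst hsk
      have hne1 : k + 1 ≠ i + 1 := fun h => hki (by linear_combination' h)
      have hk : k + 1 - 1 = k := by ring
      have := ZW_pred_mem hsW hne1
      rw [hk] at this
      exact ⟨k, this, hx⟩
  · exfalso
    simp only [E, Sym2.eq_iff] at he
    have : ∃ w, u = cB a b w := by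
      rcases he with ⟨hx, _⟩ | ⟨_, hy⟩
      · exact ⟨l, hx.symm⟩
      · exact ⟨l + 1, hy.symm⟩
    obtain ⟨w, hw⟩ := this
    have := (cA_eq_cB_iff a b s w).mp (by rw [hsu, hw])
    rw [this.1] at hsW
    exact h0 hsW

/-- Same for the `B`-cycle. -/
lemma closure_B {j j' : ZMod (b + 3)} (h0 : (0 : ZMod (b + 3)) ∉ ZW j j')
    {u v : Fin (m a b)} (hadj : (G a b).Adj u v)
    (h1 : s(u, v) ≠ E a b (.inr j)) (h2 : s(u, v) ≠ E a b (.inr j'))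
    (hu : u ∈ cB a b '' ZW j j') : v ∈ cB a b '' ZW j j' := by
  obtain ⟨⟨e, he⟩, hne⟩ := (G_adj_iff a b).mp hadj
  obtain ⟨s, hsW, hsu⟩ := hu
  rcases e with k | l
  · exfalso
    simp only [E, Sym2.eq_iff] at he
    have : ∃ w, u = cA a b w := by
      rcases he with ⟨hx, _⟩ | ⟨_, hy⟩
      · exact ⟨k, hx.symm⟩
      · exact ⟨k + 1, hy.symm⟩
    obtain ⟨w, hw⟩ := this
    have := (cA_eq_cB_iff a b w s).mp (by rw [← hw, hsu])
    rw [this.2] at hsW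
    exact h0 hsW
  · have hlj : l ≠ j := by rintro rfl; exact h1 he.symm
    have hlj' : l ≠ j' := by rintro rfl; exact h2 he.symm
    simp only [E, Sym2.eq_iff] at he
    rcases he with ⟨hx, hy⟩ | ⟨hx, hy⟩
    · have hsk : s = l := cB_injective a b (by rw [hsu, hx])
      subst hsk
      exact ⟨s + 1, ZW_succ_mem hsW hlj', hy⟩
    · have hsk : s = l + 1 := cB_injective a b (by rw [hsu, hy])
      subst hsk
      have hne1 : l + 1 ≠ j + 1 := fun h => hlj (by linear_combination' h)
      have hk : l + 1 - 1 = l := by ring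
      have := ZW_pred_mem hsW hne1
      rw [hk] at this
      exact ⟨l, this, hx⟩


lemma not_connected_of_missing_A (H : (G a b).Subgraph) (hsp : H.IsSpanning)
    {i i' : ZMod (a + 3)} (hii : i ≠ i')
    (h1 : E a b (.inl i) ∉ H.edgeSet) (h2 : E a b (.inl i') ∉ H.edgeSet) :
    ¬H.coe.Connected := by
  suffices haux : ∀ (i i' : ZMod (a + 3)), i ≠ i' → E a b (.inl i) ∉ H.edgeSet →
      E a b (.inl i') ∉ H.edgeSet → (0 : ZMod (a + 3)) ∉ ZW i i' → ¬H.coe.Connected by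
    by_cases h0 : (0 : ZMod (a + 3)) ∈ ZW i i'
    · exact haux i' i hii.symm h2 h1 (ZW_disjoint hii h0)
    · exact haux i i' hii h1 h2 h0
  clear h1 h2 hii
  intro i i' hii h1 h2 h0 hconn
  have hu0 : cA a b (i + 1) ∈ cA a b '' ZW i i' := ⟨i + 1, ZW_left_succ hii, rfl⟩
  obtain ⟨w⟩ := hconn.preconnected ⟨cA a b (i + 1), hsp _⟩ ⟨cA a b 0, hsp _⟩
  have hcl : ∀ ⦃x y : H.verts⦄, H.coe.Adj x y →
      (↑x : Fin (m a b)) ∈ cA a b '' ZW i i' → (↑y : Fin (m a b)) ∈ cA a b '' ZW i i' := by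
    intro x y hxy hx
    have hH : H.Adj ↑x ↑y := hxy
    refine closure_A a b h0 (H.adj_sub hH) ?_ ?_ hx
    · intro h; exact h1 (h ▸ Subgraph.mem_edgeSet.mpr hH)
    · intro h; exact h2 (h ▸ Subgraph.mem_edgeSet.mpr hH)
  obtain ⟨t, htW, ht⟩ := walk_confine Subtype.val (cA a b '' ZW i i') hcl w hu0
  have htz : t = 0 := cA_injective a b ht
  exact h0 (htz ▸ htW)

lemma not_connected_of_missing_B (H : (G a b).Subgraph) (hsp : H.IsSpanning)
    {j j' : ZMod (b + 3)} (hjj : j ≠ j')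
    (h1 : E a b (.inr j) ∉ H.edgeSet) (h2 : E a b (.inr j') ∉ H.edgeSet) :
    ¬H.coe.Connected := by
  suffices haux : ∀ (j j' : ZMod (b + 3)), j ≠ j' → E a b (.inr j) ∉ H.edgeSet →
      E a b (.inr j') ∉ H.edgeSet → (0 : ZMod (b + 3)) ∉ ZW j j' → ¬H.coe.Connected by
    by_cases h0 : (0 : ZMod (b + 3)) ∈ ZW j j'
    · exact haux j' j hjj.symm h2 h1 (ZW_disjoint hjj h0)
    · exact haux j j' hjj h1 h2 h0
  clear h1 h2 hjj
  intro j j' hjj h1 h2 h0 hconn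
  have hu0 : cB a b (j + 1) ∈ cB a b '' ZW j j' := ⟨j + 1, ZW_left_succ hjj, rfl⟩
  obtain ⟨w⟩ := hconn.preconnected ⟨cB a b (j + 1), hsp _⟩ ⟨cB a b 0, hsp _⟩
  have hcl : ∀ ⦃x y : H.verts⦄, H.coe.Adj x y →
      (↑x : Fin (m a b)) ∈ cB a b '' ZW j j' → (↑y : Fin (m a b)) ∈ cB a b '' ZW j j' := by
    intro x y hxy hx
    have hH : H.Adj ↑x ↑y := hxy
    refine closure_B a b h0 (H.adj_sub hH) ?_ ?_ hx
    · intro h; exact h1 (h ▸ Subgraph.mem_edgeSet.mpr hH)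
    · intro h; exact h2 (h ▸ Subgraph.mem_edgeSet.mpr hH)
  obtain ⟨t, htW, ht⟩ := walk_confine Subtype.val (cB a b '' ZW j j') hcl w hu0
  have htz : t = 0 := cB_injective a b ht
  exact h0 (htz ▸ htW)


lemma Hsub_adj_A (i : ZMod (a + 3)) (j : ZMod (b + 3)) {s : ZMod (a + 3)} (hs : s ≠ i) :
    (Hsub a b i j).Adj (cA a b s) (cA a b (s + 1)) := by
  refine ⟨G_adj_cA a b s, ?_, ?_⟩
  · intro h
    have h' : E a b (.inl s) = E a b (.inl i) := h
    have := E_injective a b h'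
    simp only [Sum.inl.injEq] at this
    exact hs this
  · intro h
    have h' : E a b (.inl s) = E a b (.inr j) := h
    have := E_injective a b h'
    simp at this

lemma Hsub_adj_B (i : ZMod (a + 3)) (j : ZMod (b + 3)) {s : ZMod (b + 3)} (hs : s ≠ j) :
    (Hsub a b i j).Adj (cB a b s) (cB a b (s + 1)) := by
  refine ⟨G_adj_cB a b s, ?_, ?_⟩
  · intro h
    have h' : E a b (.inr s) = E a b (.inl i) := h
    have := E_injective a b h'
    simp at this
  · intro h
    have h' : E a b (.inr s) = E a b (.inr j) := h
    have := E_injective a b h'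
    simp only [Sum.inr.injEq] at this
    exact hs this

lemma reach_A (i : ZMod (a + 3)) (j : ZMod (b + 3)) :
    ∀ (k : ℕ) (s : ZMod (a + 3)), (s - (i + 1)).val = k →
      (Hsub a b i j).coe.Reachable ⟨cA a b (i + 1), Set.mem_univ _⟩ ⟨cA a b s, Set.mem_univ _⟩ := by
  intro k
  induction k with
  | zero =>
    intro s hs
    have h0 : s = i + 1 := by
      have : s - (i + 1) = 0 := (ZMod.val_eq_zero _).mp hs
      linear_combination' this
    subst h0
    exact Reachable.refl _
  | succ k ih =>
    intro s hs
    have hz : s - (i + 1) ≠ 0 := by intro h; rw [h, ZMod.val_zero] at hs; omega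
    have hsne : s ≠ i + 1 := fun h => hz (by rw [h]; ring)
    have hprev : (s - 1 - (i + 1)).val = k := by
      have e : s - 1 - (i + 1) = s - (i + 1) - 1 := by ring
      have h2 := zval_sub_one hz
      rw [e]; omega
    have hadj : (Hsub a b i j).Adj (cA a b (s - 1)) (cA a b s) := by
      have h1 : s - 1 ≠ i := fun h => hsne (by linear_combination' h)
      have h2 := Hsub_adj_A a b i j h1
      rwa [show s - 1 + 1 = s by ring] at h2
    exact (ih (s - 1) hprev).trans
      (Adj.reachable (show (Hsub a b i j).coe.Adj ⟨cA a b (s - 1), Set.mem_univ _⟩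
        ⟨cA a b s, Set.mem_univ _⟩ from hadj))

lemma reach_B (i : ZMod (a + 3)) (j : ZMod (b + 3)) :
    ∀ (k : ℕ) (s : ZMod (b + 3)), (s - (j + 1)).val = k →
      (Hsub a b i j).coe.Reachable ⟨cB a b (j + 1), Set.mem_univ _⟩ ⟨cB a b s, Set.mem_univ _⟩ := by
  intro k
  induction k with
  | zero =>
    intro s hs
    have h0 : s = j + 1 := by
      have : s - (j + 1) = 0 := (ZMod.val_eq_zero _).mp hs
      linear_combination' this
    subst h0
    exact Reachable.refl _
  | succ k ih =>
    intro s hs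
    have hz : s - (j + 1) ≠ 0 := by intro h; rw [h, ZMod.val_zero] at hs; omega
    have hsne : s ≠ j + 1 := fun h => hz (by rw [h]; ring)
    have hprev : (s - 1 - (j + 1)).val = k := by
      have e : s - 1 - (j + 1) = s - (j + 1) - 1 := by ring
      have h2 := zval_sub_one hz
      rw [e]; omega
    have hadj : (Hsub a b i j).Adj (cB a b (s - 1)) (cB a b s) := by
      have h1 : s - 1 ≠ j := fun h => hsne (by linear_combination' h)
      have h2 := Hsub_adj_B a b i j h1
      rwa [show s - 1 + 1 = s by ring] at h2
    exact (ih (s - 1) hprev).trans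
      (Adj.reachable (show (Hsub a b i j).coe.Adj ⟨cB a b (s - 1), Set.mem_univ _⟩
        ⟨cB a b s, Set.mem_univ _⟩ from hadj))

lemma cB_zero_eq_cA_zero : cB a b 0 = cA a b 0 := by rw [cB_zero, cA_zero]

lemma reach_center (i : ZMod (a + 3)) (j : ZMod (b + 3)) (v : Fin (m a b)) :
    (Hsub a b i j).coe.Reachable ⟨v, Set.mem_univ _⟩ ⟨cA a b 0, Set.mem_univ _⟩ := by
  by_cases hv : v.val < a + 3
  · have hcs : cA a b ((v.val : ℕ) : ZMod (a + 3)) = v := by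
      apply Fin.ext
      simp only [cA, ZMod.val_natCast_of_lt hv]
    have r1 := reach_A a b i j _ (((v.val : ℕ) : ZMod (a + 3))) rfl
    have r0 := reach_A a b i j _ (0 : ZMod (a + 3)) rfl
    rw [hcs] at r1
    exact r1.symm.trans r0
  · have hvlt := v.isLt
    simp only [m] at hvlt
    have hval : v.val - (a + 2) < b + 3 := by omega
    have hval1 : 1 ≤ v.val - (a + 2) := by omega
    set l : ZMod (b + 3) := ((v.val - (a + 2) : ℕ) : ZMod (b + 3)) with hl
    have hlval : l.val = v.val - (a + 2) := ZMod.val_natCast_of_lt hval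
    have hlne : l ≠ 0 := by
      intro h
      rw [h, ZMod.val_zero] at hlval
      omega
    have hcs : cB a b l = v := by
      apply Fin.ext
      simp only [cB, if_neg hlne, hlval]
      omega
    have r1 := reach_B a b i j _ l rfl
    have r0 := reach_B a b i j _ (0 : ZMod (b + 3)) rfl
    rw [hcs] at r1
    rw [show (⟨cB a b 0, Set.mem_univ _⟩ : (Hsub a b i j).verts) = ⟨cA a b 0, Set.mem_univ _⟩
      from Subtype.ext (cB_zero_eq_cA_zero a b)] at r0
    exact r1.symm.trans r0

lemma Hsub_connected (i : ZMod (a + 3)) (j : ZMod (b + 3)) : (Hsub a b i j).coe.Connected := by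
  rw [connected_iff]
  constructor
  · intro x y
    exact (reach_center a b i j ↑x).trans (reach_center a b i j ↑y).symm
  · exact ⟨⟨cA a b 0, Set.mem_univ _⟩⟩


lemma Hsub_isAcyclic (i : ZMod (a + 3)) (j : ZMod (b + 3)) : (Hsub a b i j).coe.IsAcyclic := by
  rw [isAcyclic_iff_forall_adj_isBridge]
  intro x y hxy
  rw [isBridge_iff]
  rintro ⟨w⟩
  have hH : (Hsub a b i j).Adj ↑x ↑y := hxy
  have hG : (G a b).Adj ↑x ↑y := hH.1
  obtain ⟨e, he⟩ := ((G_adj_iff a b).mp hG).1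
  have hKadj : ∀ ⦃p q : (Hsub a b i j).verts⦄,
      ((Hsub a b i j).coe \ fromEdgeSet {s(x, y)}).Adj p q →
      (G a b).Adj ↑p ↑q ∧ s((p : Fin (m a b)), (q : Fin (m a b))) ≠ E a b e ∧
        s((p : Fin (m a b)), (q : Fin (m a b))) ≠ E a b (.inl i) ∧
        s((p : Fin (m a b)), (q : Fin (m a b))) ≠ E a b (.inr j) := by
    intro p q hpq
    rw [sdiff_adj] at hpq
    obtain ⟨hpq1, hpq2⟩ := hpq
    have hp : (Hsub a b i j).Adj ↑p ↑q := hpq1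
    refine ⟨hp.1, ?_, hp.2.1, hp.2.2⟩
    intro hcontra
    rw [he] at hcontra
    have hpqne : p ≠ q := fun hh => hp.1.ne (by rw [hh])
    apply hpq2
    rw [fromEdgeSet_adj]
    refine ⟨?_, hpqne⟩
    rw [Set.mem_singleton_iff]
    rcases Sym2.eq_iff.mp hcontra with ⟨h1, h2⟩ | ⟨h1, h2⟩
    · rw [Subtype.ext h1, Subtype.ext h2]
    · rw [Subtype.ext h1, Subtype.ext h2, Sym2.eq_swap]
  rcases e with k | l
  · have hki : k ≠ i := by rintro rfl; exact hH.2.1 he.symm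
    simp only [E] at he
    by_cases h0 : (0 : ZMod (a + 3)) ∈ ZW k i
    · have h0' : (0 : ZMod (a + 3)) ∉ ZW i k := ZW_disjoint hki h0
      have hcl : ∀ ⦃p q : (Hsub a b i j).verts⦄,
          ((Hsub a b i j).coe \ fromEdgeSet {s(x, y)}).Adj p q →
          (↑p : Fin (m a b)) ∈ cA a b '' ZW i k → (↑q : Fin (m a b)) ∈ cA a b '' ZW i k := by
        intro p q hpq hp
        obtain ⟨hg, hek, hei, _⟩ := hKadj hpq
        exact closure_A a b h0' hg hei hek hp
      rcases Sym2.eq_iff.mp he with ⟨hx1, hy1⟩ | ⟨hx1, hy1⟩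
      · -- ↑x = cA k : start from x
        have hstart : (↑x : Fin (m a b)) ∈ cA a b '' ZW i k :=
          ⟨k, ZW_right hki.symm, hx1⟩
        obtain ⟨t, htW, ht⟩ := walk_confine Subtype.val _ hcl w hstart
        have htv : t = k + 1 := cA_injective a b (by rw [ht, ← hy1])
        exact ZW_disjoint hki (ZW_left_succ hki) (htv ▸ htW)
      · -- ↑y = cA k : start from y
        have hstart : (↑y : Fin (m a b)) ∈ cA a b '' ZW i k :=
          ⟨k, ZW_right hki.symm, hx1⟩
        obtain ⟨t, htW, ht⟩ := walk_confine Subtype.val _ hcl w.reverse hstart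
        have htv : t = k + 1 := cA_injective a b (by rw [ht, ← hy1])
        exact ZW_disjoint hki (ZW_left_succ hki) (htv ▸ htW)
    · have hcl : ∀ ⦃p q : (Hsub a b i j).verts⦄,
          ((Hsub a b i j).coe \ fromEdgeSet {s(x, y)}).Adj p q →
          (↑p : Fin (m a b)) ∈ cA a b '' ZW k i → (↑q : Fin (m a b)) ∈ cA a b '' ZW k i := by
        intro p q hpq hp
        obtain ⟨hg, hek, hei, _⟩ := hKadj hpq
        exact closure_A a b h0 hg hek hei hp
      rcases Sym2.eq_iff.mp he with ⟨hx1, hy1⟩ | ⟨hx1, hy1⟩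
      · -- ↑y = cA (k+1) : start from y
        have hstart : (↑y : Fin (m a b)) ∈ cA a b '' ZW k i :=
          ⟨k + 1, ZW_left_succ hki, hy1⟩
        obtain ⟨t, htW, ht⟩ := walk_confine Subtype.val _ hcl w.reverse hstart
        have htv : t = k := cA_injective a b (by rw [ht, ← hx1])
        exact ZW_not_left k i (htv ▸ htW)
      · -- ↑x = cA (k+1) : start from x
        have hstart : (↑x : Fin (m a b)) ∈ cA a b '' ZW k i :=
          ⟨k + 1, ZW_left_succ hki, hy1⟩
        obtain ⟨t, htW, ht⟩ := walk_confine Subtype.val _ hcl w hstart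
        have htv : t = k := cA_injective a b (by rw [ht, ← hx1])
        exact ZW_not_left k i (htv ▸ htW)
  · have hlj : l ≠ j := by rintro rfl; exact hH.2.2 he.symm
    simp only [E] at he
    by_cases h0 : (0 : ZMod (b + 3)) ∈ ZW l j
    · have h0' : (0 : ZMod (b + 3)) ∉ ZW j l := ZW_disjoint hlj h0
      have hcl : ∀ ⦃p q : (Hsub a b i j).verts⦄,
          ((Hsub a b i j).coe \ fromEdgeSet {s(x, y)}).Adj p q →
          (↑p : Fin (m a b)) ∈ cB a b '' ZW j l → (↑q : Fin (m a b)) ∈ cB a b '' ZW j l := by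
        intro p q hpq hp
        obtain ⟨hg, hek, _, hej⟩ := hKadj hpq
        exact closure_B a b h0' hg hej hek hp
      rcases Sym2.eq_iff.mp he with ⟨hx1, hy1⟩ | ⟨hx1, hy1⟩
      · have hstart : (↑x : Fin (m a b)) ∈ cB a b '' ZW j l :=
          ⟨l, ZW_right hlj.symm, hx1⟩
        obtain ⟨t, htW, ht⟩ := walk_confine Subtype.val _ hcl w hstart
        have htv : t = l + 1 := cB_injective a b (by rw [ht, ← hy1])
        exact ZW_disjoint hlj (ZW_left_succ hlj) (htv ▸ htW)
      · have hstart : (↑y : Fin (m a b)) ∈ cB a b '' ZW j l :=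
          ⟨l, ZW_right hlj.symm, hx1⟩
        obtain ⟨t, htW, ht⟩ := walk_confine Subtype.val _ hcl w.reverse hstart
        have htv : t = l + 1 := cB_injective a b (by rw [ht, ← hy1])
        exact ZW_disjoint hlj (ZW_left_succ hlj) (htv ▸ htW)
    · have hcl : ∀ ⦃p q : (Hsub a b i j).verts⦄,
          ((Hsub a b i j).coe \ fromEdgeSet {s(x, y)}).Adj p q →
          (↑p : Fin (m a b)) ∈ cB a b '' ZW l j → (↑q : Fin (m a b)) ∈ cB a b '' ZW l j := by
        intro p q hpq hp
        obtain ⟨hg, hek, _, hej⟩ := hKadj hpq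
        exact closure_B a b h0 hg hek hej hp
      rcases Sym2.eq_iff.mp he with ⟨hx1, hy1⟩ | ⟨hx1, hy1⟩
      · have hstart : (↑y : Fin (m a b)) ∈ cB a b '' ZW l j :=
          ⟨l + 1, ZW_left_succ hlj, hy1⟩
        obtain ⟨t, htW, ht⟩ := walk_confine Subtype.val _ hcl w.reverse hstart
        have htv : t = l := cB_injective a b (by rw [ht, ← hx1])
        exact ZW_not_left l j (htv ▸ htW)
      · have hstart : (↑x : Fin (m a b)) ∈ cB a b '' ZW l j :=
          ⟨l + 1, ZW_left_succ hlj, hy1⟩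
        obtain ⟨t, htW, ht⟩ := walk_confine Subtype.val _ hcl w hstart
        have htv : t = l := cB_injective a b (by rw [ht, ← hx1])
        exact ZW_not_left l j (htv ▸ htW)

lemma Hsub_isTree (i : ZMod (a + 3)) (j : ZMod (b + 3)) : (Hsub a b i j).coe.IsTree :=
  ⟨Hsub_connected a b i j, Hsub_isAcyclic a b i j⟩


lemma E_inl_ne_inr (i : ZMod (a + 3)) (j : ZMod (b + 3)) :
    E a b (.inl i) ≠ E a b (.inr j) := fun h => by simpa using E_injective a b h

lemma eq_Hsub_of_missing (H : (G a b).Subgraph) (hsp : H.IsSpanning)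
    (hM : ((G a b).edgeSet \ H.edgeSet).ncard = 2)
    (i : ZMod (a + 3)) (j : ZMod (b + 3))
    (hi : E a b (.inl i) ∉ H.edgeSet) (hj : E a b (.inr j) ∉ H.edgeSet) :
    H = Hsub a b i j := by
  have hpairsub : ({E a b (Sum.inl i), E a b (Sum.inr j)} : Set (Sym2 (Fin (m a b)))) ⊆
      (G a b).edgeSet \ H.edgeSet := by
    rintro e (rfl | rfl)
    · exact ⟨by rw [G_edgeSet]; exact ⟨.inl i, rfl⟩, hi⟩
    · exact ⟨by rw [G_edgeSet]; exact ⟨.inr j, rfl⟩, hj⟩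
  have hpaircard : ({E a b (Sum.inl i), E a b (Sum.inr j)} : Set (Sym2 (Fin (m a b)))).ncard = 2 :=
    Set.ncard_pair (E_inl_ne_inr a b i j)
  have hMpair : (G a b).edgeSet \ H.edgeSet =
      {E a b (Sum.inl i), E a b (Sum.inr j)} :=
    (Set.eq_of_subset_of_ncard_le hpairsub (by omega) (Set.toFinite _)).symm
  have hverts : H.verts = (Hsub a b i j).verts := hsp.verts_eq_univ
  ext u v
  · rw [hverts]
  · constructor
    · intro hadj
      have hmem : s(u, v) ∈ H.edgeSet := Subgraph.mem_edgeSet.mpr hadj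
      refine ⟨H.adj_sub hadj, ?_, ?_⟩
      · intro h; rw [h] at hmem; exact hi hmem
      · intro h; rw [h] at hmem; exact hj hmem
    · rintro ⟨hg, h1, h2⟩
      by_contra hna
      have hmem : s(u, v) ∈ (G a b).edgeSet \ H.edgeSet :=
        ⟨(G a b).mem_edgeSet.mpr hg, fun hc => hna (Subgraph.mem_edgeSet.mp hc)⟩
      rw [hMpair] at hmem
      rcases hmem with h | h
      · exact h1 h
      · exact h2 h


lemma missing_card (H : (G a b).Subgraph) (hsp : H.IsSpanning) (htree : H.coe.IsTree) :
    ((G a b).edgeSet \ H.edgeSet).ncard = 2 := by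
  classical
  haveI : Fintype ↥H.verts := Fintype.ofFinite _
  haveI : Fintype ↥(H.coe.edgeSet) := Fintype.ofFinite _
  have hcard := htree.card_edgeFinset
  have hverts : Fintype.card ↥H.verts = m a b := by
    calc Fintype.card ↥H.verts = Nat.card ↥H.verts := Nat.card_eq_fintype_card.symm
    _ = Nat.card (Fin (m a b)) := by
        rw [hsp.verts_eq_univ]; exact Nat.card_congr (Equiv.Set.univ _)
    _ = m a b := by simp
  have h1 : H.coe.edgeSet.ncard = H.coe.edgeFinset.card := by
    rw [Set.ncard_eq_toFinset_card']; rfl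
  have h2 : H.edgeSet.ncard = H.coe.edgeSet.ncard := by
    rw [← Subgraph.image_coe_edgeSet_coe,
      Set.ncard_image_of_injective _ (Sym2.map.injective Subtype.val_injective)]
  have hGcard : (G a b).edgeSet.ncard = a + b + 6 := by
    rw [← Nat.card_coe_set_eq]; exact card_edgeSet a b
  have hHcard : H.edgeSet.ncard = a + b + 4 := by
    simp only [m] at hverts
    omega
  rw [Set.ncard_diff H.edgeSet_subset (Set.toFinite _), hGcard, hHcard]
  omega

lemma tree_eq_Hsub (H : (G a b).Subgraph) (hsp : H.IsSpanning) (htree : H.coe.IsTree) :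
    ∃ i j, H = Hsub a b i j := by
  have hM := missing_card a b H hsp htree
  obtain ⟨e₁, e₂, hne, hMeq⟩ := Set.ncard_eq_two.mp hM
  have hm1 : e₁ ∈ (G a b).edgeSet \ H.edgeSet := hMeq ▸ Set.mem_insert _ _
  have hm2 : e₂ ∈ (G a b).edgeSet \ H.edgeSet := hMeq ▸ Set.mem_insert_of_mem _ rfl
  have hMsub : (G a b).edgeSet \ H.edgeSet ⊆ Set.range (E a b) := by
    rw [← G_edgeSet]; exact Set.diff_subset
  obtain ⟨f₁, hf₁⟩ := hMsub hm1
  obtain ⟨f₂, hf₂⟩ := hMsub hm2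
  have hmem1 : E a b f₁ ∉ H.edgeSet := by rw [hf₁]; exact hm1.2
  have hmem2 : E a b f₂ ∉ H.edgeSet := by rw [hf₂]; exact hm2.2
  have hff : f₁ ≠ f₂ := fun h => hne (by rw [← hf₁, ← hf₂, h])
  rcases f₁ with k₁ | l₁ <;> rcases f₂ with k₂ | l₂
  · exact absurd htree.isConnected
      (not_connected_of_missing_A a b H hsp (by simpa using hff) hmem1 hmem2)
  · exact ⟨k₁, l₂, eq_Hsub_of_missing a b H hsp hM k₁ l₂ hmem1 hmem2⟩
  · exact ⟨k₂, l₁, eq_Hsub_of_missing a b H hsp hM k₂ l₁ hmem2 hmem1⟩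
  · exact absurd htree.isConnected
      (not_connected_of_missing_B a b H hsp (by simpa using hff) hmem1 hmem2)

lemma numSpanningTrees_eq : numSpanningTrees (G a b) = (a + 3) * (b + 3) := by
  have hbij : Function.Bijective
      (fun p : ZMod (a + 3) × ZMod (b + 3) =>
        (⟨Hsub a b p.1 p.2, Hsub_spanning a b p.1 p.2, Hsub_isTree a b p.1 p.2⟩ :
          {H : (G a b).Subgraph // H.IsSpanning ∧ H.coe.IsTree})) := by
    constructor
    · rintro ⟨i, j⟩ ⟨i', j'⟩ hp
      have heq : Hsub a b i j = Hsub a b i' j' := congrArg Subtype.val hp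
      have hi : i = i' := by
        by_contra hii
        have h1 := Hsub_adj_A a b i' j' (s := i) hii
        rw [← heq] at h1
        exact h1.2.1 rfl
      have hj : j = j' := by
        by_contra hjj
        have h1 := Hsub_adj_B a b i' j' (s := j) hjj
        rw [← heq] at h1
        exact h1.2.2 rfl
      rw [Prod.ext_iff]
      exact ⟨hi, hj⟩
    · rintro ⟨H, hsp, htree⟩
      obtain ⟨i, j, hij⟩ := tree_eq_Hsub a b H hsp htree
      exact ⟨(i, j), by simp [← hij]⟩
  rw [numSpanningTrees, ← Nat.card_eq_of_bijective _ hbij, Nat.card_prod,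
    Nat.card_zmod, Nat.card_zmod]

lemma graphBeta_le (a b : ℕ) : graphBeta ((a + 3) * (b + 3)) ≤ a + b + 6 :=
  Nat.sInf_le ⟨m a b, G a b, card_edgeSet a b, numSpanningTrees_eq a b⟩

end FigEight

theorem stmt_12 (n : ℕ)
    (hn : n ∈ ({40, 42, 45, 48, 60, 70, 72, 78, 85, 88, 102, 105, 112, 120, 130, 133,
      165, 168, 190, 210, 232, 240, 253, 273, 280, 312, 330, 345, 357, 385, 408, 462,
      520, 760, 840, 1320, 1365, 1848} : Set ℕ)) :
    4 * graphBeta n ≤ n + 13 := by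
  simp only [Set.mem_insert_iff, Set.mem_singleton_iff] at hn
  rcases hn with rfl|rfl|rfl|rfl|rfl|rfl|rfl|rfl|rfl|rfl|rfl|rfl|rfl|rfl|rfl|rfl|rfl|rfl|rfl|rfl|rfl|rfl|rfl|rfl|rfl|rfl|rfl|rfl|rfl|rfl|rfl|rfl|rfl|rfl|rfl|rfl|rfl|rfl
  · have h := FigEight.graphBeta_le 2 5
    norm_num at h
    omega
  · have h := FigEight.graphBeta_le 3 4
    norm_num at h
    omega
  · have h := FigEight.graphBeta_le 2 6
    norm_num at h
    omega
  · have h := FigEight.graphBeta_le 3 5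
    norm_num at h
    omega
  · have h := FigEight.graphBeta_le 3 7
    norm_num at h
    omega
  · have h := FigEight.graphBeta_le 4 7
    norm_num at h
    omega
  · have h := FigEight.graphBeta_le 5 6
    norm_num at h
    omega
  · have h := FigEight.graphBeta_le 3 10
    norm_num at h
    omega
  · have h := FigEight.graphBeta_le 2 14
    norm_num at h
    omega
  · have h := FigEight.graphBeta_le 5 8
    norm_num at h
    omega
  · have h := FigEight.graphBeta_le 3 14
    norm_num at h
    omega
  · have h := FigEight.graphBeta_le 4 12
    norm_num at h
    omega
  · have h := FigEight.graphBeta_le 5 11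
    norm_num at h
    omega
  · have h := FigEight.graphBeta_le 7 9
    norm_num at h
    omega
  · have h := FigEight.graphBeta_le 7 10
    norm_num at h
    omega
  · have h := FigEight.graphBeta_le 4 16
    norm_num at h
    omega
  · have h := FigEight.graphBeta_le 8 12
    norm_num at h
    omega
  · have h := FigEight.graphBeta_le 9 11
    norm_num at h
    omega
  · have h := FigEight.graphBeta_le 7 16
    norm_num at h
    omega
  · have h := FigEight.graphBeta_le 11 12
    norm_num at h
    omega
  · have h := FigEight.graphBeta_le 5 26
    norm_num at h
    omega
  · have h := FigEight.graphBeta_le 12 13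
    norm_num at h
    omega
  · have h := FigEight.graphBeta_le 8 20
    norm_num at h
    omega
  · have h := FigEight.graphBeta_le 10 18
    norm_num at h
    omega
  · have h := FigEight.graphBeta_le 11 17
    norm_num at h
    omega
  · have h := FigEight.graphBeta_le 10 21
    norm_num at h
    omega
  · have h := FigEight.graphBeta_le 12 19
    norm_num at h
    omega
  · have h := FigEight.graphBeta_le 12 20
    norm_num at h
    omega
  · have h := FigEight.graphBeta_le 14 18
    norm_num at h
    omega
  · have h := FigEight.graphBeta_le 8 32
    norm_num at h
    omega
  · have h := FigEight.graphBeta_le 14 21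
    norm_num at h
    omega
  · have h := FigEight.graphBeta_le 18 19
    norm_num at h
    omega
  · have h := FigEight.graphBeta_le 17 23
    norm_num at h
    omega
  · have h := FigEight.graphBeta_le 17 35
    norm_num at h
    omega
  · have h := FigEight.graphBeta_le 25 27
    norm_num at h
    omega
  · have h := FigEight.graphBeta_le 30 37
    norm_num at h
    omega
  · have h := FigEight.graphBeta_le 32 36
    norm_num at h
    omega
  · have h := FigEight.graphBeta_le 39 41
    norm_num at h
    omega
end

section
/- Let a, b, c, x be integers with a ≥ 2, b ≥ 1, c ≥ 1, at least one of b, c at least 2, and 1 ≤ x ≤ a. Then 2·x·(bc + (a − x)(b + c)) ≥ ab + ac + bc. (This is the inequality that, combined with the identity τ(Θ¹_{a,b,c,d}(a₁)) = d·τ(Θ_{a,b,c}) + a₁·τ(Θ_{a−a₁,b,c}), expresses τ(Θ¹_{a,b,c,d}(a₁)) ≥ (d + 1/2)·τ(Θ_{a,b,c}).) -/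
theorem stmt_18 (a b c x : ℤ) (ha : 2 ≤ a) (hb : 1 ≤ b) (hc : 1 ≤ c)
    (hbc : 2 ≤ b ∨ 2 ≤ c) (hx1 : 1 ≤ x) (hxa : x ≤ a) :
    2 * (x * (b * c + (a - x) * (b + c))) ≥ a * b + a * c + b * c := by
  rcases eq_or_lt_of_le hxa with rfl | hlt
  · rcases hbc with h | h
    · have key : (1:ℤ) * 1 ≤ (x - 1) * (b - 1) := by
        apply mul_le_mul <;> linarith
      nlinarith [mul_nonneg (mul_nonneg (by linarith : (0:ℤ) ≤ x) (by linarith : (0:ℤ) ≤ b)) (by linarith : (0:ℤ) ≤ c - 1),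
        mul_nonneg (by linarith : (0:ℤ) ≤ (x-1)*(b-1) - 1) (by linarith : (0:ℤ) ≤ c)]
    · have key : (1:ℤ) * 1 ≤ (x - 1) * (c - 1) := by
        apply mul_le_mul <;> linarith
      nlinarith [mul_nonneg (mul_nonneg (by linarith : (0:ℤ) ≤ x) (by linarith : (0:ℤ) ≤ c)) (by linarith : (0:ℤ) ≤ b - 1),
        mul_nonneg (by linarith : (0:ℤ) ≤ (x-1)*(c-1) - 1) (by linarith : (0:ℤ) ≤ b)]
  · have h1 : x ≤ a - 1 := by linarith
    nlinarith [mul_nonneg (mul_nonneg (by linarith : (0:ℤ) ≤ x - 1) (by linarith : (0:ℤ) ≤ a - 1 - x)) (by linarith : (0:ℤ) ≤ b + c),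
      mul_nonneg (mul_nonneg (by linarith : (0:ℤ) ≤ x - 1) (by linarith : (0:ℤ) ≤ b)) (by linarith : (0:ℤ) ≤ c),
      mul_nonneg (by linarith : (0:ℤ) ≤ a - 2) (by linarith : (0:ℤ) ≤ b + c),
      mul_nonneg (by linarith : (0:ℤ) ≤ b) (by linarith : (0:ℤ) ≤ c)]
end

section
/- Let a, b, c, a₁, b₁ be integers with a ≥ 2, b ≥ 2, c ≥ 1, 1 ≤ a₁ ≤ a − 1 and 1 ≤ b₁ ≤ b − 1, and set a₂ = a − a₁ and b₂ = b − b₁. Then c·(a₁ + b₁)·(a₂ + b₂) + a₁a₂b + b₁b₂a ≥ ab + ac + bc. (This is the inequality that, combined with the identity τ(Θ²_{a,b,c,d}(a₁,b₁)) = d·τ(Θ_{a,b,c}) + c(a₁ + b₁)(a₂ + b₂) + a₁a₂b + b₁b₂a, expresses τ(Θ²_{a,b,c,d}(a₁,b₁)) ≥ (d + 1)·τ(Θ_{a,b,c}).) -/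
theorem stmt_19 (a b c a₁ b₁ : ℤ) (ha : 2 ≤ a) (hb : 2 ≤ b) (hc : 1 ≤ c)
    (ha₁ : 1 ≤ a₁) (ha₁a : a₁ ≤ a - 1) (hb₁ : 1 ≤ b₁) (hb₁b : b₁ ≤ b - 1) :
    c * (a₁ + b₁) * ((a - a₁) + (b - b₁)) + a₁ * (a - a₁) * b + b₁ * (b - b₁) * a ≥
      a * b + a * c + b * c := by
  have h1 : a - 1 ≤ a₁ * (a - a₁) := by nlinarith [mul_nonneg (sub_nonneg.2 ha₁) (by linarith : (0:ℤ) ≤ a - a₁ - 1)]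
  have h2 : b - 1 ≤ b₁ * (b - b₁) := by nlinarith [mul_nonneg (sub_nonneg.2 hb₁) (by linarith : (0:ℤ) ≤ b - b₁ - 1)]
  have h1b : (a - 1) * b ≤ a₁ * (a - a₁) * b := by
    apply mul_le_mul_of_nonneg_right h1; linarith
  have h2a : (b - 1) * a ≤ b₁ * (b - b₁) * a := by
    apply mul_le_mul_of_nonneg_right h2; linarith
  have hs : a + b ≤ (a₁ + b₁) * ((a - a₁) + (b - b₁)) := by
    nlinarith [mul_pos (by linarith : (0:ℤ) < a₁) (by linarith : (0:ℤ) < b - b₁),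
      mul_pos (by linarith : (0:ℤ) < b₁) (by linarith : (0:ℤ) < a - a₁)]
  have hcs : c * (a + b) ≤ c * ((a₁ + b₁) * ((a - a₁) + (b - b₁))) :=
    mul_le_mul_of_nonneg_left hs (by linarith)
  have hab : a + b ≤ a * b := by nlinarith
  nlinarith [hcs, h1b, h2a, hab]
end
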